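/- Fix real numbers ℓ > 0 and L ≥ 2ℓ, and define q : ℝ → ℝ by q(x) = cos((x−ℓ)π/(4ℓ)) if |x| ≤ ℓ, q(x) = 1 if ℓ < x < L−ℓ, q(x) = cos((x−(L−ℓ))π/(4ℓ)) if |x−L| ≤ ℓ, and q(x) = 0 otherwise. Let d ≥ 1 and define h : ℝ^d → ℝ by h(x) = ∏_{α=1}^d q(x_α). Let φ : ℝ^d → ℂ be measurable, periodic with period L in each coordinate (φ(x + L e_α) = φ(x) for every standard basis vector e_α and every x), and with ∫_{[0,L]^d} |φ|² < ∞. Then ∫_{[−ℓ, L+ℓ]^d} h(x)² |φ(x)|² dx = ∫_{[0,L]^d} |φ(x)|² dx. -/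

import Mathlib

/-!
Write `w = q²`. For `x ∈ (0, L]` the translates `w (x - L)`, `w x`, `w (x + L)` add up to `1`
(`cos² + sin² = 1` where two cosine ramps overlap, `w = 1` on the plateau) and all other
translates by multiples of `L` vanish. Hence reduction mod `L` pushes the measure `w(t) dt`
forward to Lebesgue measure on `(0, L]`, and coordinatewise reduction pushes `∏ w(x_α) dx`
forward to Lebesgue measure on `(0, L]^d`. Since `|φ|²` is invariant under this reduction, the
two integrals agree.
-/

open MeasureTheory Set Function
open scoped ENNReal

theorem MeasureTheory.IsAddFundamentalDomain.lintegral_mul_eq_setLIntegral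
    {G α : Type*} [AddGroup G] [Countable G] [AddAction G α] [MeasurableSpace α]
    [MeasurableConstVAdd G α] {μ : Measure α} [VAddInvariantMeasure G α μ] {s : Set α}
    (hs : IsAddFundamentalDomain G s μ) {w f : α → ℝ≥0∞} (hw : Measurable w)
    (hf : Measurable f) (hw_sum : ∀ x ∈ s, ∑' g : G, w (g +ᵥ x) = 1)
    (hf_inv : ∀ (g : G) x, f (g +ᵥ x) = f x) :
    ∫⁻ x, w x * f x ∂μ = ∫⁻ x in s, f x ∂μ := by
  calc ∫⁻ x, w x * f x ∂μ = ∑' g : G, ∫⁻ x in s, w (g +ᵥ x) * f x ∂μ := by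
        rw [hs.lintegral_eq_tsum'']
        simp only [hf_inv]
    _ = ∫⁻ x in s, (∑' g : G, w (g +ᵥ x)) * f x ∂μ := by
        simp only [← ENNReal.tsum_mul_right]
        refine (lintegral_tsum fun g => ?_).symm
        exact ((hw.comp (measurable_const_vadd g)).mul hf).aemeasurable
    _ = ∫⁻ x in s, f x ∂μ :=
        lintegral_congr_ae <| (ae_restrict_mem₀ hs.nullMeasurableSet).mono fun x hx => by
          simp only [hw_sum x hx, one_mul]

theorem MeasureTheory.lintegral_fin_nat_prod_eq_prod {n : ℕ} {E : Fin n → Type*}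
    {mE : ∀ i, MeasurableSpace (E i)} {μ : (i : Fin n) → Measure (E i)} [∀ i, SigmaFinite (μ i)]
    {f : (i : Fin n) → E i → ℝ≥0∞} (hf : ∀ i, Measurable (f i)) :
    ∫⁻ x : (i : Fin n) → E i, ∏ i, f i (x i) ∂(Measure.pi μ) = ∏ i, ∫⁻ x, f i x ∂(μ i) := by
  induction n with
  | zero => simp
  | succ n ih =>
      calc
        _ = ∫⁻ x : E 0 × ((i : Fin n) → E (Fin.succAbove 0 i)),
            f 0 x.1 * ∏ i : Fin n, f (Fin.succAbove 0 i) (x.2 i)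
            ∂((μ 0).prod (Measure.pi (fun i ↦ μ (Fin.succAbove 0 i)))) := by
          rw [(measurePreserving_piFinSuccAbove μ 0).lintegral_map_equiv]
          simp only [Fin.prod_univ_succAbove _ 0]
          rfl
        _ = (∫⁻ x, f 0 x ∂μ 0) *
            ∏ i : Fin n, ∫⁻ x, f (Fin.succAbove 0 i) x ∂(μ (Fin.succAbove 0 i)) := by
          rw [← ih fun i => hf _]
          exact lintegral_prod_mul (hf 0).aemeasurable
            (Finset.measurable_prod _ fun i _ => (hf _).comp (measurable_pi_apply i)).aemeasurable
        _ = ∏ i, ∫⁻ x, f i x ∂(μ i) := (Fin.prod_univ_succAbove (fun i => ∫⁻ x, f i x ∂μ i) 0).symm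

theorem MeasureTheory.Measure.pi_withDensity {n : ℕ} {E : Fin n → Type*}
    {mE : ∀ i, MeasurableSpace (E i)} {μ : (i : Fin n) → Measure (E i)} [∀ i, SigmaFinite (μ i)]
    {f : (i : Fin n) → E i → ℝ≥0∞} (hf : ∀ i, Measurable (f i))
    [∀ i, SigmaFinite ((μ i).withDensity (f i))] :
    Measure.pi (fun i => (μ i).withDensity (f i))
      = (Measure.pi μ).withDensity fun x => ∏ i, f i (x i) := by
  refine Measure.pi_eq fun t ht => ?_
  rw [withDensity_apply _ (.univ_pi ht), Measure.restrict_pi_pi,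
    lintegral_fin_nat_prod_eq_prod hf]
  exact Finset.prod_congr rfl fun i _ => (withDensity_apply _ (ht i)).symm

theorem tsum_zmultiples_eq_tsum_int {M : Type*} [AddCommMonoid M] [TopologicalSpace M] {L : ℝ}
    (hL : L ≠ 0) (F : ℝ → M) :
    ∑' g : AddSubgroup.zmultiples L, F g = ∑' n : ℤ, F (n * L) := by
  let e : ℤ ≃ AddSubgroup.zmultiples L := Equiv.ofBijective
    (fun n => ⟨n • L, AddSubgroup.zsmul_mem_zmultiples L n⟩)
    ⟨fun m n h => smul_left_injective ℤ hL (congrArg Subtype.val h),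
      fun ⟨_, hg⟩ => (AddSubgroup.mem_zmultiples_iff.1 hg).imp fun _ h => Subtype.ext h⟩
  simp only [← e.tsum_eq, e, Equiv.ofBijective_apply, zsmul_eq_mul]

theorem measurable_toIocMod {L : ℝ} (hL : 0 < L) (a : ℝ) : Measurable (toIocMod hL a) := by
  simp only [funext (toIocMod_eq_sub_fract_mul hL a)]
  fun_prop

theorem measurePreserving_toIocMod_withDensity {L : ℝ} (hL : 0 < L) (a : ℝ) {w : ℝ → ℝ≥0∞}
    (hw : Measurable w) (hw_sum : ∀ x ∈ Ioc a (a + L), ∑' n : ℤ, w (n * L + x) = 1) :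
    MeasurePreserving (toIocMod hL a) (volume.withDensity w)
      (volume.restrict (Ioc a (a + L))) := by
  have hT := measurable_toIocMod hL a
  refine ⟨hT, Measure.ext fun s hs => ?_⟩
  rw [Measure.map_apply hT hs]
  calc volume.withDensity w (toIocMod hL a ⁻¹' s)
      = ∫⁻ x, w x * s.indicator 1 (toIocMod hL a x) := by
        rw [withDensity_apply _ (hT hs), ← lintegral_indicator (hT hs)]
        refine lintegral_congr fun x => ?_
        by_cases hx : toIocMod hL a x ∈ s <;> simp [hx]
    _ = ∫⁻ x in Ioc a (a + L), s.indicator 1 (toIocMod hL a x) := by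
        refine (isAddFundamentalDomain_Ioc hL a).lintegral_mul_eq_setLIntegral hw
          ((measurable_one.indicator hs).comp hT)
          (fun x hx => (tsum_zmultiples_eq_tsum_int hL.ne' fun y => w (y + x)).trans
            (hw_sum x hx)) fun ⟨g, hg⟩ x => ?_
        obtain ⟨k, rfl⟩ := AddSubgroup.mem_zmultiples_iff.1 hg
        change s.indicator 1 (toIocMod hL a (k • L + x)) = s.indicator 1 (toIocMod hL a x)
        rw [toIocMod_zsmul_add]
    _ = volume.restrict (Ioc a (a + L)) s := by
        rw [setLIntegral_congr_fun measurableSet_Ioc fun x hx => by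
          rw [(toIocMod_eq_self hL).2 hx], lintegral_indicator_one hs]

structure IsCosineCutoff (ℓ L : ℝ) (q : ℝ → ℝ) : Prop where
  eq_cos_left : ∀ x, |x| ≤ ℓ → q x = Real.cos ((x - ℓ) * Real.pi / (4 * ℓ))
  eq_one : ∀ x, ℓ < x → x < L - ℓ → q x = 1
  eq_cos_right : ∀ x, |x - L| ≤ ℓ → q x = Real.cos ((x - (L - ℓ)) * Real.pi / (4 * ℓ))
  eq_zero : ∀ x, ¬ |x| ≤ ℓ → ¬ (ℓ < x ∧ x < L - ℓ) → ¬ |x - L| ≤ ℓ → q x = 0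

namespace IsCosineCutoff

variable {ℓ L : ℝ} {q : ℝ → ℝ}

theorem measurable (hq : IsCosineCutoff ℓ L q) : Measurable q := by
  classical
  have hq_ite : q = fun x => if |x| ≤ ℓ then Real.cos ((x - ℓ) * Real.pi / (4 * ℓ))
      else if ℓ < x ∧ x < L - ℓ then 1
      else if |x - L| ≤ ℓ then Real.cos ((x - (L - ℓ)) * Real.pi / (4 * ℓ)) else 0 := by
    funext x
    split_ifs with h₁ h₂ h₃
    exacts [hq.eq_cos_left x h₁, hq.eq_one x h₂.1 h₂.2, hq.eq_cos_right x h₃,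
      hq.eq_zero x h₁ h₂ h₃]
  rw [hq_ite]
  refine Measurable.ite (measurableSet_le (by fun_prop) (by fun_prop)) (by fun_prop) ?_
  refine Measurable.ite (measurableSet_Ioo (a := ℓ) (b := L - ℓ)) (by fun_prop) ?_
  exact Measurable.ite (measurableSet_le (by fun_prop) (by fun_prop)) (by fun_prop) (by fun_prop)

theorem eq_zero_of_notMem_Ioo (hq : IsCosineCutoff ℓ L q) (hℓ : 0 < ℓ) (hL : 0 ≤ L) {x : ℝ}
    (hx : x ∉ Ioo (-ℓ) (L + ℓ)) : q x = 0 := by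
  rw [mem_Ioo, not_and_or, not_lt, not_lt] at hx
  rcases hx with hx | hx
  · rcases hx.lt_or_eq with hx | rfl
    · exact hq.eq_zero x (by rw [abs_le]; intro h; linarith [h.1]) (by intro h; linarith [h.1])
        (by rw [abs_le]; intro h; linarith [h.1])
    · rw [hq.eq_cos_left _ (by rw [abs_neg, abs_of_pos hℓ]), ← Real.cos_neg]
      convert Real.cos_pi_div_two using 2
      field_simp
      ring
  · rcases hx.lt_or_eq with hx | rfl
    · exact hq.eq_zero x (by rw [abs_le]; intro h; linarith [h.2]) (by intro h; linarith [h.2])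
        (by rw [abs_le]; intro h; linarith [h.2])
    · rw [hq.eq_cos_right _ (by rw [add_sub_cancel_left, abs_of_pos hℓ])]
      convert Real.cos_pi_div_two using 2
      field_simp
      ring

theorem eq_one_of_mem_Icc (hq : IsCosineCutoff ℓ L q) (hℓ : 0 ≤ ℓ) {x : ℝ}
    (hx : x ∈ Icc ℓ (L - ℓ)) : q x = 1 := by
  rcases hx.1.lt_or_eq with h₁ | rfl
  · rcases hx.2.lt_or_eq with h₂ | rfl
    · exact hq.eq_one x h₁ h₂
    · rw [hq.eq_cos_right _ (by rw [sub_sub_cancel_left, abs_neg, abs_of_nonneg hℓ])]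
      simp
  · rw [hq.eq_cos_left _ (abs_of_nonneg hℓ).le]
    simp

theorem sq_add_sq_translate_eq_one (hq : IsCosineCutoff ℓ L q) (hℓ : 0 < ℓ) {x : ℝ} (hx : |x| ≤ ℓ) :
    q x ^ 2 + q (x + L) ^ 2 = 1 := by
  have hshift : (x + L - (L - ℓ)) * Real.pi / (4 * ℓ)
      = (x - ℓ) * Real.pi / (4 * ℓ) + Real.pi / 2 := by
    field_simp
    ring
  rw [hq.eq_cos_left x hx, hq.eq_cos_right (x + L) (by rwa [add_sub_cancel_right]), hshift,
    Real.cos_add_pi_div_two, neg_sq, Real.cos_sq_add_sin_sq]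

theorem sum_sq_translates_eq_one (hq : IsCosineCutoff ℓ L q) (hℓ : 0 < ℓ)
    (hL : 2 * ℓ ≤ L) {x : ℝ} (hx : x ∈ Ioc 0 L) :
    q (x - L) ^ 2 + q x ^ 2 + q (x + L) ^ 2 = 1 := by
  obtain ⟨hx₀, hxL⟩ := hx
  have zero_of_notMem : ∀ y ∉ Ioo (-ℓ) (L + ℓ), q y = 0 := fun y =>
    hq.eq_zero_of_notMem_Ioo hℓ (by linarith)
  rcases lt_or_ge x ℓ with h₁ | h₁
  · rw [zero_of_notMem (x - L) fun h => by linarith [h.1], add_assoc,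
      hq.sq_add_sq_translate_eq_one hℓ (abs_le.2 ⟨by linarith, h₁.le⟩)]
    ring
  rcases le_or_gt x (L - ℓ) with h₂ | h₂
  · rw [zero_of_notMem (x - L) fun h => by linarith [h.1],
      zero_of_notMem (x + L) fun h => by linarith [h.2],
      hq.eq_one_of_mem_Icc hℓ.le ⟨h₁, h₂⟩]
    ring
  · have := hq.sq_add_sq_translate_eq_one hℓ (x := x - L) (abs_le.2 ⟨by linarith, by linarith⟩)
    rw [sub_add_cancel] at this
    rw [this, zero_of_notMem (x + L) fun h => by linarith [h.2]]
    ring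

theorem tsum_ofReal_sq_translates_eq_one (hq : IsCosineCutoff ℓ L q) (hℓ : 0 < ℓ) (hL : 2 * ℓ ≤ L)
    {x : ℝ} (hx : x ∈ Ioc 0 L) :
    ∑' n : ℤ, ENNReal.ofReal (q (n * L + x) ^ 2) = 1 := by
  rw [tsum_eq_sum (s := {-1, 0, 1}) fun n hn => ?_]
  · rw [Finset.sum_insert (by decide), Finset.sum_insert (by decide), Finset.sum_singleton]
    simp only [Int.cast_neg, Int.cast_one, Int.cast_zero, neg_one_mul, zero_mul, one_mul,
      zero_add]
    rw [← ENNReal.ofReal_add (by positivity) (by positivity),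
      ← ENNReal.ofReal_add (by positivity) (by positivity), neg_add_eq_sub, add_comm L x,
      ← add_assoc, hq.sum_sq_translates_eq_one hℓ hL hx, ENNReal.ofReal_one]
  · have hn' : (n : ℝ) ≤ -2 ∨ 2 ≤ (n : ℝ) := by
      simp only [Finset.mem_insert, Finset.mem_singleton, not_or] at hn
      exact_mod_cast (by omega : n ≤ -2 ∨ 2 ≤ n)
    rw [hq.eq_zero_of_notMem_Ioo hℓ (by linarith) fun h => ?_, sq, mul_zero, ENNReal.ofReal_zero]
    obtain ⟨hx₀, hxL⟩ := hx
    rcases hn' with hn' | hn' <;> nlinarith [h.1, h.2]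

end IsCosineCutoff

theorem apply_toIocMod_pi_eq_of_periodic {ι β : Type*} [Fintype ι] [DecidableEq ι] {L : ℝ}
    (hL : 0 < L) (a : ℝ) {φ : (ι → ℝ) → β} (hφ : ∀ i, Periodic φ (L • Pi.single i 1))
    (x : ι → ℝ) : φ (fun i => toIocMod hL a (x i)) = φ x := by
  have hx : x = (fun i => toIocMod hL a (x i))
      + ∑ i, toIocDiv hL a (x i) • (L • Pi.single i (1 : ℝ)) := by
    ext j
    simp [Finset.sum_apply, Pi.single_apply, mul_comm L, toIocMod_add_toIocDiv_mul]
  have hper : Periodic φ (∑ i, toIocDiv hL a (x i) • (L • Pi.single i (1 : ℝ))) :=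
    Finset.sum_induction _ (Periodic φ) (fun _ _ => Periodic.add_period)
      (periodic_with_period_zero φ) fun i _ => (hφ i).zsmul _
  conv_rhs => rw [hx]
  exact (hper _).symm

theorem lintegral_prod_mul_eq_setLIntegral_of_periodic {d : ℕ} {L : ℝ} (hL : 0 < L) (a : ℝ)
    {w : ℝ → ℝ≥0∞} (hw : Measurable w) [SigmaFinite (volume.withDensity w)]
    (hw_sum : ∀ x ∈ Ioc a (a + L), ∑' n : ℤ, w (n * L + x) = 1) {F : (Fin d → ℝ) → ℝ≥0∞}
    (hF : Measurable F) (hF_per : ∀ i, Periodic F (L • Pi.single i 1)) :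
    ∫⁻ x, (∏ i, w (x i)) * F x = ∫⁻ x in univ.pi fun _ => Icc a (a + L), F x := by
  have hmp : MeasurePreserving (fun x i => toIocMod hL a (x i))
      (Measure.pi fun _ : Fin d => volume.withDensity w)
      (Measure.pi fun _ : Fin d => volume.restrict (Ioc a (a + L))) :=
    measurePreserving_pi _ _ fun _ => measurePreserving_toIocMod_withDensity hL a hw hw_sum
  calc ∫⁻ x, (∏ i, w (x i)) * F x
      = ∫⁻ x, F x ∂(Measure.pi fun _ : Fin d => volume.withDensity w) := by
        rw [Measure.pi_withDensity fun _ => hw, lintegral_withDensity_eq_lintegral_mul _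
          (by fun_prop) hF]
        rfl
    _ = ∫⁻ x, F (fun i => toIocMod hL a (x i))
          ∂(Measure.pi fun _ : Fin d => volume.withDensity w) := by
        simp only [apply_toIocMod_pi_eq_of_periodic hL a hF_per]
    _ = ∫⁻ x in univ.pi fun _ => Icc a (a + L), F x := by
        rw [hmp.lintegral_comp hF, ← Measure.restrict_pi_pi]
        exact setLIntegral_congr Measure.pi_Ioc_ae_eq_pi_Icc

theorem cosine_cutoff_isometry_multidim_general
    (ℓ L : ℝ) (hℓ : 0 < ℓ) (hL : 2 * ℓ ≤ L)
    (q : ℝ → ℝ)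
    (hq1 : ∀ x : ℝ, |x| ≤ ℓ → q x = Real.cos ((x - ℓ) * Real.pi / (4 * ℓ)))
    (hq2 : ∀ x : ℝ, ℓ < x → x < L - ℓ → q x = 1)
    (hq3 : ∀ x : ℝ, |x - L| ≤ ℓ → q x = Real.cos ((x - (L - ℓ)) * Real.pi / (4 * ℓ)))
    (hq4 : ∀ x : ℝ, ¬ |x| ≤ ℓ → ¬ (ℓ < x ∧ x < L - ℓ) → ¬ |x - L| ≤ ℓ → q x = 0)
    (d : ℕ)
    (h : (Fin d → ℝ) → ℝ) (hh : ∀ x, h x = ∏ α : Fin d, q (x α))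
    (φ : (Fin d → ℝ) → ℂ) (hφ_meas : Measurable φ)
    (hφ_per : ∀ (x : Fin d → ℝ) (α : Fin d), φ (x + L • (Pi.single α 1 : Fin d → ℝ)) = φ x) :
    (∫ x in Set.univ.pi fun _ : Fin d => Set.Icc (-ℓ) (L + ℓ),
        h x ^ 2 * ‖φ x‖ ^ 2) =
      ∫ x in Set.univ.pi fun _ : Fin d => Set.Icc (0 : ℝ) L,
        ‖φ x‖ ^ 2 := by
  have hq : IsCosineCutoff ℓ L q := ⟨hq1, hq2, hq3, hq4⟩
  have hL₀ : 0 < L := by linarith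
  have hq_meas := hq.measurable
  have hh_meas : Measurable h := by rw [funext hh]; fun_prop
  set w : ℝ → ℝ≥0∞ := fun t => ENNReal.ofReal (q t ^ 2)
  set F : (Fin d → ℝ) → ℝ≥0∞ := fun x => ENNReal.ofReal (‖φ x‖ ^ 2)
  have hsupp : support (fun x : Fin d → ℝ => (∏ i, w (x i)) * F x)
      ⊆ univ.pi fun _ => Icc (-ℓ) (L + ℓ) := by
    refine fun x hx i _ => by_contra fun hxi => hx (show (∏ i, w (x i)) * F x = 0 from ?_)
    have hqx : q (x i) = 0 :=
      hq.eq_zero_of_notMem_Ioo hℓ hL₀.le fun hxi' => hxi (Ioo_subset_Icc_self hxi')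
    rw [Finset.prod_eq_zero (f := fun j => w (x j)) (Finset.mem_univ i) (by simp [w, hqx]),
      zero_mul]
  have hcollapse := lintegral_prod_mul_eq_setLIntegral_of_periodic (w := w) (F := F) hL₀ 0
    (by fun_prop) (fun x hx => hq.tsum_ofReal_sq_translates_eq_one hℓ hL (by simpa using hx))
    (by fun_prop) fun α x => by simp only [F, hφ_per]
  rw [zero_add] at hcollapse
  rw [integral_eq_lintegral_of_nonneg_ae (ae_of_all _ fun _ => by positivity) (by fun_prop),
    integral_eq_lintegral_of_nonneg_ae (ae_of_all _ fun _ => by positivity) (by fun_prop),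
    ← hcollapse, ← setLIntegral_eq_of_support_subset hsupp]
  congr 2 with x
  rw [hh, ← Finset.prod_pow, ENNReal.ofReal_mul (Finset.prod_nonneg fun i _ => sq_nonneg _),
    ENNReal.ofReal_prod_of_nonneg fun i _ => sq_nonneg _]

/-- The `d`-dimensional cosine cutoff `h(x) = ∏ q(x_α)` maps an `L`-periodic
function `φ` on `[0,L]^d` isometrically (in `L²`) to a function on `[−ℓ, L+ℓ]^d`. -/
theorem cosine_cutoff_isometry_multidim
    (ℓ L : ℝ) (hℓ : 0 < ℓ) (hL : 2 * ℓ ≤ L)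
    (q : ℝ → ℝ)
    (hq1 : ∀ x : ℝ, |x| ≤ ℓ → q x = Real.cos ((x - ℓ) * Real.pi / (4 * ℓ)))
    (hq2 : ∀ x : ℝ, ℓ < x → x < L - ℓ → q x = 1)
    (hq3 : ∀ x : ℝ, |x - L| ≤ ℓ → q x = Real.cos ((x - (L - ℓ)) * Real.pi / (4 * ℓ)))
    (hq4 : ∀ x : ℝ, ¬ |x| ≤ ℓ → ¬ (ℓ < x ∧ x < L - ℓ) → ¬ |x - L| ≤ ℓ → q x = 0)
    (d : ℕ) (hd : 1 ≤ d)
    (h : (Fin d → ℝ) → ℝ) (hh : ∀ x, h x = ∏ α : Fin d, q (x α))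
    (φ : (Fin d → ℝ) → ℂ) (hφ_meas : Measurable φ)
    (hφ_per : ∀ (x : Fin d → ℝ) (α : Fin d), φ (x + L • (Pi.single α 1 : Fin d → ℝ)) = φ x)
    (hφ_int : IntegrableOn (fun x => ‖φ x‖ ^ 2)
      (Set.univ.pi fun _ : Fin d => Set.Icc 0 L)) :
    (∫ x in Set.univ.pi fun _ : Fin d => Set.Icc (-ℓ) (L + ℓ),
        h x ^ 2 * ‖φ x‖ ^ 2) =
      ∫ x in Set.univ.pi fun _ : Fin d => Set.Icc (0 : ℝ) L,
        ‖φ x‖ ^ 2 :=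
  cosine_cutoff_isometry_multidim_general ℓ L hℓ hL q hq1 hq2 hq3 hq4 d h hh φ hφ_meas hφ_per
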